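/- Assume additionally that the null p-values are super-uniform, i.e. P(p_i ≤ t) ≤ t for all t ∈ [0,1] and all i ∈ H_0. Then for any nondecreasing sequence of critical values τ = (τ_1, …, τ_m) ∈ [0,1]^m, the false discovery rate of the step-up procedure SU(τ) satisfies FDR(SU(τ)) ≤ m · max_{1 ≤ k ≤ m} τ_k/k. In particular, the Benjamini–Hochberg procedure, given by τ_k = αk/m for α ∈ (0,1), satisfies FDR ≤ α. -/

import Mathlib

open MeasureTheory ProbabilityTheory Finset

/-- Number of rejections of the step-up procedure with critical values `τ 1, …, τ m`
(convention `τ 0 = 0`): the largest `k ∈ {0, …, m}` such that at least `k` of the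
p-values are `≤ τ k`. -/
noncomputable def numRejSU (m : ℕ) (τ : ℕ → ℝ) (q : Fin m → ℝ) : ℕ :=
  sSup {k | k ≤ m ∧ k ≤ (univ.filter (fun j => q j ≤ τ k)).card}

/-- Rejection set of the step-up procedure. -/
noncomputable def rejSU (m : ℕ) (τ : ℕ → ℝ) (q : Fin m → ℝ) : Finset (Fin m) :=
  univ.filter (fun i => q i ≤ τ (numRejSU m τ q))

/-- False discovery proportion of a rejection set `R` w.r.t. the set of true nulls `H0`. -/
noncomputable def FDP (m : ℕ) (H0 R : Finset (Fin m)) : ℝ :=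
  ((R ∩ H0).card : ℝ) / max (R.card : ℝ) 1

/-!
Let `K i` be the number of rejections once the `i`-th p-value is replaced by `0`. Because `τ` is
nondecreasing, `i` is rejected iff `p i ≤ τ (K i)`, and then the procedure makes exactly `K i`
rejections; hence `FDP = ∑ i ∈ H0, 1{p i ≤ τ (K i)} / K i`. As `K i` is a function of the other
p-values it is independent of `p i`, so by super-uniformity the `i`-th term has expectation
`∑ k, P(K i = k) P(p i ≤ τ k) / k ≤ max_k τ k / k`. Summing over at most `m` true nulls gives the
bound; for Benjamini–Hochberg every ratio `τ k / k` equals `α / m`.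
-/

section StepUp

variable {m : ℕ} {τ : ℕ → ℝ}

lemma numRejSU_spec (q : Fin m → ℝ) :
    numRejSU m τ q ≤ m ∧ numRejSU m τ q ≤ #{j | q j ≤ τ (numRejSU m τ q)} :=
  Nat.sSup_mem (s := {k | k ≤ m ∧ k ≤ #{j | q j ≤ τ k}}) ⟨0, by simp⟩ ⟨m, fun _ hk => hk.1⟩

lemma le_numRejSU {q : Fin m → ℝ} {k : ℕ} (hkm : k ≤ m) (hk : k ≤ #{j | q j ≤ τ k}) :
    k ≤ numRejSU m τ q :=
  le_csSup ⟨m, fun _ hk => hk.1⟩ ⟨hkm, hk⟩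

lemma card_filter_le_mono {q : Fin m → ℝ} {s t : ℝ} (hst : s ≤ t) :
    #{j | q j ≤ s} ≤ #{j | q j ≤ t} :=
  card_le_card (monotone_filter_right _ fun _ _ h => h.trans hst)

lemma card_rejSU (hτ : MonotoneOn τ (Set.Iic m)) (q : Fin m → ℝ) :
    #(rejSU m τ q) = numRejSU m τ q := by
  obtain ⟨hnm, hn⟩ := numRejSU_spec (τ := τ) q
  refine le_antisymm ?_ hn
  by_contra! h
  have hn1 : numRejSU m τ q + 1 ≤ m := h.trans_le (card_le_univ _ |>.trans_eq (Fintype.card_fin m))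
  have := le_numRejSU (q := q) hn1 (h.trans_le (card_filter_le_mono (hτ hnm hn1 (by omega))))
  omega

lemma filter_update_zero_le_eq_insert (q : Fin m → ℝ) (i : Fin m) {t : ℝ} (ht : 0 ≤ t) :
    univ.filter (fun j => Function.update q i 0 j ≤ t) = insert i (univ.filter (q · ≤ t)) := by
  ext j
  rcases eq_or_ne j i with rfl | hji <;> simp [*]

variable (hτ0 : ∀ k ≤ m, 0 ≤ τ k)
include hτ0

lemma numRejSU_le_numRejSU_update_zero (q : Fin m → ℝ) (i : Fin m) :
    numRejSU m τ q ≤ numRejSU m τ (Function.update q i 0) := by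
  obtain ⟨hnm, hn⟩ := numRejSU_spec (τ := τ) q
  refine le_numRejSU hnm (hn.trans (card_le_card ?_))
  rw [filter_update_zero_le_eq_insert q i (hτ0 _ hnm)]
  exact subset_insert _ _

lemma one_le_numRejSU_update_zero (q : Fin m → ℝ) (i : Fin m) :
    1 ≤ numRejSU m τ (Function.update q i 0) :=
  le_numRejSU i.pos (card_pos.2 ⟨i, by simp [hτ0 1 i.pos]⟩)

lemma numRejSU_eq_of_le_update_zero {q : Fin m → ℝ} {i : Fin m}
    (hqi : q i ≤ τ (numRejSU m τ (Function.update q i 0))) :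
    numRejSU m τ q = numRejSU m τ (Function.update q i 0) := by
  obtain ⟨hKm, hK⟩ := numRejSU_spec (τ := τ) (Function.update q i 0)
  rw [filter_update_zero_le_eq_insert q i (hτ0 _ hKm), insert_eq_of_mem (by simpa)] at hK
  exact le_antisymm (numRejSU_le_numRejSU_update_zero hτ0 q i) (le_numRejSU hKm hK)

lemma mem_rejSU_iff (hτ : MonotoneOn τ (Set.Iic m)) (q : Fin m → ℝ) (i : Fin m) :
    i ∈ rejSU m τ q ↔ q i ≤ τ (numRejSU m τ (Function.update q i 0)) := by
  simp only [rejSU, mem_filter, mem_univ, true_and]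
  refine ⟨fun h => h.trans (hτ (numRejSU_spec q).1 (numRejSU_spec _).1
    (numRejSU_le_numRejSU_update_zero hτ0 q i)), fun h => ?_⟩
  rwa [numRejSU_eq_of_le_update_zero hτ0 h]

lemma FDP_rejSU_eq_sum (hτ : MonotoneOn τ (Set.Iic m)) (H0 : Finset (Fin m)) (q : Fin m → ℝ) :
    FDP m H0 (rejSU m τ q) = ∑ i ∈ H0, if q i ≤ τ (numRejSU m τ (Function.update q i 0))
      then (numRejSU m τ (Function.update q i 0) : ℝ)⁻¹ else 0 := by
  rw [FDP, inter_comm, ← filter_mem_eq_inter, card_filter, Nat.cast_sum, sum_div]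
  refine sum_congr rfl fun i _ => ?_
  by_cases hi : i ∈ rejSU m τ q
  · have hqi := (mem_rejSU_iff hτ0 hτ q i).1 hi
    have hK := one_le_numRejSU_update_zero hτ0 q i
    rw [if_pos hi, if_pos hqi, card_rejSU hτ, numRejSU_eq_of_le_update_zero hτ0 hqi,
      max_eq_left (by exact_mod_cast hK), Nat.cast_one, one_div]
  · rw [if_neg hi, if_neg (mt (mem_rejSU_iff hτ0 hτ q i).2 hi), Nat.cast_zero, zero_div]

end StepUp

lemma measurable_card_filter_le {ι : Type*} [Fintype ι] (t : ℝ) :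
    Measurable fun q : ι → ℝ => #{j | q j ≤ t} := by
  simp_rw [card_filter]
  exact Finset.measurable_sum _ fun j _ =>
    Measurable.ite (measurableSet_le (measurable_pi_apply j) measurable_const) measurable_const
      measurable_const

lemma measurable_numRejSU (m : ℕ) (τ : ℕ → ℝ) : Measurable (numRejSU m τ) := by
  let g : (Fin (m + 1) → ℕ) → ℕ := fun c => sSup {k | ∃ h : k < m + 1, k ≤ c ⟨k, h⟩}
  have hg : numRejSU m τ = g ∘ fun q (k : Fin (m + 1)) => #{j | q j ≤ τ k} := by
    ext q
    simp [numRejSU, g]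
  rw [hg]
  exact (measurable_of_countable g).comp
    (measurable_pi_lambda _ fun k => measurable_card_filter_le (τ k))

lemma ProbabilityTheory.iIndepFun.indepFun_comp_update {Ω ι E β : Type*} [MeasurableSpace Ω]
    [MeasurableSpace E] [MeasurableSpace β] [Fintype ι] [DecidableEq ι] {P : Measure Ω}
    {X : ι → Ω → E} (hX : iIndepFun X P) (hmeas : ∀ i, Measurable (X i)) (i : ι) (c : E)
    {g : (ι → E) → β} (hg : Measurable g) :
    IndepFun (fun ω => g (Function.update (fun j => X j ω) i c)) (X i) P := by
  have hind := hX.indepFun_finset {i}ᶜ {i} disjoint_compl_left hmeas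
  have hφ : Measurable fun x : ({i}ᶜ : Finset ι) → E =>
      g fun j => if h : j ∈ ({i}ᶜ : Finset ι) then x ⟨j, h⟩ else c := by
    refine hg.comp (measurable_pi_lambda _ fun j => ?_)
    split_ifs
    exacts [measurable_pi_apply _, measurable_const]
  convert hind.comp hφ (measurable_pi_apply ⟨i, mem_singleton_self i⟩) using 1
  · ext ω
    simp only [Function.comp_apply]
    congr 1
    ext j
    rcases eq_or_ne j i with rfl | hji <;> simp [*]
  · rfl

section

variable {Ω : Type*} [MeasurableSpace Ω] {P : Measure Ω} {X : Ω → ℝ} {K : Ω → ℕ}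

lemma integrable_ite_le_inv (hX : Measurable X) (hK : Measurable K) [IsFiniteMeasure P]
    (τ : ℕ → ℝ) : Integrable (fun ω => if X ω ≤ τ (K ω) then (K ω : ℝ)⁻¹ else 0) P := by
  refine .of_bound (Measurable.aestronglyMeasurable ?_) 1 (ae_of_all _ fun ω => ?_)
  · exact Measurable.ite (measurableSet_le hX (measurable_from_nat.comp hK))
      (measurable_from_nat (f := fun n : ℕ => (n : ℝ)⁻¹) |>.comp hK) measurable_const
  · split_ifs <;> simp [Nat.cast_inv_le_one]

lemma integral_ite_le_inv_le [IsProbabilityMeasure P] (hX : Measurable X) (hK : Measurable K)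
    (hXK : IndepFun K X P) {s : Finset ℕ} (hKs : ∀ ω, K ω ∈ s) (τ : ℕ → ℝ) {M : ℝ}
    (hM : ∀ k ∈ s, P.real {ω | X ω ≤ τ k} / k ≤ M) :
    ∫ ω, (if X ω ≤ τ (K ω) then (K ω : ℝ)⁻¹ else 0) ∂P ≤ M := by
  have hA : ∀ k, MeasurableSet (K ⁻¹' {k} ∩ X ⁻¹' Set.Iic (τ k)) := fun k =>
    (hK (measurableSet_singleton k)).inter (hX measurableSet_Iic)
  have hsplit : (fun ω => if X ω ≤ τ (K ω) then (K ω : ℝ)⁻¹ else 0) =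
      fun ω => ∑ k ∈ s, (K ⁻¹' {k} ∩ X ⁻¹' Set.Iic (τ k)).indicator (fun _ => (k : ℝ)⁻¹) ω := by
    ext ω
    rw [sum_eq_single_of_mem (K ω) (hKs ω) fun k _ hk => by simp [Ne.symm hk]]
    by_cases h : X ω ≤ τ (K ω) <;> simp [h]
  calc ∫ ω, (if X ω ≤ τ (K ω) then (K ω : ℝ)⁻¹ else 0) ∂P
      = ∑ k ∈ s, P.real (K ⁻¹' {k}) * (P.real {ω | X ω ≤ τ k} / k) := by
        rw [hsplit, integral_finsetSum _ fun k _ => (integrable_const _).indicator (hA k)]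
        refine sum_congr rfl fun k _ => ?_
        rw [integral_indicator_const _ (hA k), measureReal_def, measureReal_def,
          measureReal_def, hXK.measure_inter_preimage_eq_mul _ _ (measurableSet_singleton k)
          measurableSet_Iic, ENNReal.toReal_mul, smul_eq_mul, mul_assoc, ← div_eq_mul_inv]
        rfl
    _ ≤ ∑ k ∈ s, P.real (K ⁻¹' {k}) * M :=
        sum_le_sum fun k hk => mul_le_mul_of_nonneg_left (hM k hk) measureReal_nonneg
    _ = M := by
        rw [← sum_mul, sum_measureReal_preimage_singleton s fun k _ => hK (measurableSet_singleton k),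
          Set.preimage_eq_univ_iff.2 fun _ ⟨ω, hω⟩ => hω ▸ hKs ω, probReal_univ, one_mul]

end

theorem integral_FDP_rejSU_le {Ω : Type*} [MeasurableSpace Ω] (P : Measure Ω)
    [IsProbabilityMeasure P] {m : ℕ} (hm : 1 ≤ m) (p : Fin m → Ω → ℝ)
    (hmeas : ∀ i, Measurable (p i)) (hindep : iIndepFun p P) (H0 : Finset (Fin m))
    (hnull : ∀ i ∈ H0, ∀ t ∈ Set.Icc (0 : ℝ) 1, P {ω | p i ω ≤ t} ≤ ENNReal.ofReal t)
    (τ : ℕ → ℝ) (hτ : MonotoneOn τ (Set.Iic m)) (hτ01 : ∀ k ≤ m, τ k ∈ Set.Icc (0 : ℝ) 1) :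
    ∫ ω, FDP m H0 (rejSU m τ (fun j => p j ω)) ∂P
      ≤ m * (Icc 1 m).sup' (nonempty_Icc.mpr hm) (fun k => τ k / (k : ℝ)) := by
  set M := (Icc 1 m).sup' (nonempty_Icc.mpr hm) (fun k => τ k / (k : ℝ))
  have hτ0 : ∀ k ≤ m, 0 ≤ τ k := fun k hk => (hτ01 k hk).1
  have hM0 : 0 ≤ M := (div_nonneg (hτ0 1 hm) (Nat.cast_nonneg 1)).trans
    (le_sup' (fun k => τ k / (k : ℝ)) (mem_Icc.2 ⟨le_rfl, hm⟩))
  have hratio : ∀ i ∈ H0, ∀ k ∈ Icc 1 m, P.real {ω | p i ω ≤ τ k} / k ≤ M := by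
    intro i hi k hk
    have hkm := (mem_Icc.1 hk).2
    calc P.real {ω | p i ω ≤ τ k} / k ≤ τ k / k := by
          gcongr
          exact ENNReal.toReal_le_of_le_ofReal (hτ0 k hkm) (hnull i hi _ (hτ01 k hkm))
      _ ≤ M := le_sup' (fun k => τ k / (k : ℝ)) hk
  set K : Fin m → Ω → ℕ := fun i ω => numRejSU m τ (Function.update (fun j => p j ω) i 0)
  have hK : ∀ i, Measurable (K i) := fun i =>
    (measurable_numRejSU m τ).comp (by fun_prop)
  have hterm : ∀ i ∈ H0,
      ∫ ω, (if p i ω ≤ τ (K i ω) then (K i ω : ℝ)⁻¹ else 0) ∂P ≤ M := fun i hi =>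
    integral_ite_le_inv_le (hmeas i) (hK i)
      (hindep.indepFun_comp_update hmeas i 0 (measurable_numRejSU m τ))
      (fun ω => mem_Icc.2 ⟨one_le_numRejSU_update_zero hτ0 _ i, (numRejSU_spec _).1⟩) τ
      (hratio i hi)
  calc ∫ ω, FDP m H0 (rejSU m τ (fun j => p j ω)) ∂P
      = ∑ i ∈ H0, ∫ ω, (if p i ω ≤ τ (K i ω) then (K i ω : ℝ)⁻¹ else 0) ∂P := by
        simp_rw [FDP_rejSU_eq_sum hτ0 hτ]
        exact integral_finsetSum _ fun i _ => integrable_ite_le_inv (hmeas i) (hK i) τ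
    _ ≤ ∑ _i ∈ H0, M := sum_le_sum hterm
    _ ≤ m * M := by
        rw [sum_const, nsmul_eq_mul]
        have hH0 : (#H0 : ℝ) ≤ m := by
          exact_mod_cast (card_le_univ H0).trans_eq (Fintype.card_fin m)
        exact mul_le_mul_of_nonneg_right hH0 hM0

theorem fdr_su_superuniform_bound_and_BH_general
    {Ω : Type*} [MeasurableSpace Ω] (P : Measure Ω) [IsProbabilityMeasure P]
    (m : ℕ) (hm : 1 ≤ m)
    (p : Fin m → Ω → ℝ) (hmeas : ∀ i, Measurable (p i))
    (hindep : iIndepFun p P)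
    (H0 : Finset (Fin m))
    (hnull : ∀ i ∈ H0, ∀ t ∈ Set.Icc (0 : ℝ) 1,
      P {ω | p i ω ≤ t} ≤ ENNReal.ofReal t)
    (τ : ℕ → ℝ)
    (hτmono : ∀ k l, k ≤ l → l ≤ m → τ k ≤ τ l)
    (hτ01 : ∀ k ≤ m, τ k ∈ Set.Icc (0 : ℝ) 1)
    (α : ℝ) (hα : α ∈ Set.Ioo (0 : ℝ) 1) :
    (∫ ω, FDP m H0 (rejSU m τ (fun j => p j ω)) ∂P
      ≤ (m : ℝ) * (Finset.Icc 1 m).sup' (Finset.nonempty_Icc.mpr hm) (fun k => τ k / (k : ℝ)))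
    ∧ (∫ ω, FDP m H0 (rejSU m (fun k => α * k / m) (fun j => p j ω)) ∂P ≤ α) := by
  refine ⟨integral_FDP_rejSU_le P hm p hmeas hindep H0 hnull τ
    (fun k _ l hl hkl => hτmono k l hkl hl) hτ01, ?_⟩
  have hm0 : (0 : ℝ) < m := by exact_mod_cast hm
  have hBH_mono : MonotoneOn (fun k : ℕ => α * k / m) (Set.Iic m) := fun k _ l _ hkl => by
    dsimp only
    gcongr
    exact hα.1.le
  have hBH01 : ∀ k ≤ m, α * k / m ∈ Set.Icc (0 : ℝ) 1 := fun k hk =>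
    ⟨by have := hα.1; positivity, div_le_one_of_le₀
      ((mul_le_of_le_one_left k.cast_nonneg hα.2.le).trans (Nat.cast_le.2 hk)) hm0.le⟩
  calc _ ≤ m * (Icc 1 m).sup' (nonempty_Icc.mpr hm) (fun k => α * k / m / (k : ℝ)) :=
        integral_FDP_rejSU_le P hm p hmeas hindep H0 hnull _ hBH_mono hBH01
    _ = m * (α / m) := by
        rw [sup'_congr _ rfl fun k hk => by
          rw [div_right_comm, mul_div_assoc, div_self (Nat.cast_pos.2 (mem_Icc.1 hk).1).ne', mul_one],
          sup'_const]
    _ = α := mul_div_cancel₀ α hm0.ne'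

/-- under super-uniform null p-values,
`FDR(SU(τ)) ≤ m · max_{1 ≤ k ≤ m} τ_k/k`; in particular the Benjamini-Hochberg
procedure `τ_k = α k / m` has `FDR ≤ α`. -/
theorem fdr_su_superuniform_bound_and_BH
    {Ω : Type*} [MeasurableSpace Ω] (P : Measure Ω) [IsProbabilityMeasure P]
    (m : ℕ) (hm : 1 ≤ m)
    (p : Fin m → Ω → ℝ) (hmeas : ∀ i, Measurable (p i))
    (hp01 : ∀ i ω, p i ω ∈ Set.Icc (0 : ℝ) 1)
    (hindep : iIndepFun p P)
    (H0 : Finset (Fin m))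
    (hnull : ∀ i ∈ H0, ∀ t ∈ Set.Icc (0 : ℝ) 1,
      P {ω | p i ω ≤ t} ≤ ENNReal.ofReal t)
    (τ : ℕ → ℝ) (hτ0 : τ 0 = 0)
    (hτmono : ∀ k l, k ≤ l → l ≤ m → τ k ≤ τ l)
    (hτ01 : ∀ k ≤ m, τ k ∈ Set.Icc (0 : ℝ) 1)
    (α : ℝ) (hα : α ∈ Set.Ioo (0 : ℝ) 1) :
    (∫ ω, FDP m H0 (rejSU m τ (fun j => p j ω)) ∂P
      ≤ (m : ℝ) * (Finset.Icc 1 m).sup' (Finset.nonempty_Icc.mpr hm) (fun k => τ k / (k : ℝ)))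
    ∧ (∫ ω, FDP m H0 (rejSU m (fun k => α * k / m) (fun j => p j ω)) ∂P ≤ α) :=
  fdr_su_superuniform_bound_and_BH_general P m hm p hmeas hindep H0 hnull τ hτmono hτ01 α hα
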